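/- Adding branches to a network does not remove transitions: if N1' ≽ N1 (pointwise branching order) and the network N1 with state s makes a transition with rich label t (under procedure definitions D) to (N2, s'), then there exists N2' such that N1' with s makes a transition with label t (under D) to (N2', s') and N2' ≽ N2. -/
import Mathlib


/-- Behaviours of Stateful Processes, over process names `P`, expressions `E`,
Boolean expressions `Bx`, variables `V` and procedure names `X`.
Labels `left`/`right` are modelled as `Bool` (`true` = left). -/
inductive Beh (P E Bx V X : Type) : Type
  | endB : Beh P E Bx V X
  | send : P → E → Beh P E Bx V X → Beh P E Bx V X
  | recv : P → V → Beh P E Bx V X → Beh P E Bx V X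
  | sel : P → Bool → Beh P E Bx V X → Beh P E Bx V X
  | branch : P → Option (Beh P E Bx V X) → Option (Beh P E Bx V X) → Beh P E Bx V X
  | cond : Bx → Beh P E Bx V X → Beh P E Bx V X → Beh P E Bx V X
  | call : X → Beh P E Bx V X

/-- The branching order on behaviours. -/
inductive mb {P E Bx V X : Type} : Beh P E Bx V X → Beh P E Bx V X → Prop
  | endB : mb .endB .endB
  | send {B B'} (p : P) (e : E) : mb B B' → mb (.send p e B) (.send p e B')
  | recv {B B'} (p : P) (x : V) : mb B B' → mb (.recv p x B) (.recv p x B')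
  | sel {B B'} (p : P) (l : Bool) : mb B B' → mb (.sel p l B) (.sel p l B')
  | branch_nn (p : P) (mL mR : Option (Beh P E Bx V X)) :
      mb (.branch p mL mR) (.branch p none none)
  | branch_ns {Br Br'} (p : P) (mL : Option (Beh P E Bx V X)) :
      mb Br Br' → mb (.branch p mL (some Br)) (.branch p none (some Br'))
  | branch_sn {Bl Bl'} (p : P) (mR : Option (Beh P E Bx V X)) :
      mb Bl Bl' → mb (.branch p (some Bl) mR) (.branch p (some Bl') none)
  | branch_ss {Bl Bl' Br Br'} (p : P) :
      mb Bl Bl' → mb Br Br' →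
      mb (.branch p (some Bl) (some Br)) (.branch p (some Bl') (some Br'))
  | cond {B1 B1' B2 B2'} (b : Bx) :
      mb B1 B1' → mb B2 B2' → mb (.cond b B1 B2) (.cond b B1' B2')
  | call (x : X) : mb (.call x) (.call x)

/-- Rich transition labels. -/
inductive RL (P Val V X : Type) : Type
  | com : P → Val → P → V → RL P Val V X
  | sel : P → P → Bool → RL P Val V X
  | cond : P → RL P Val V X
  | call : X → P → RL P Val V X

section SP
variable {P E Bx V X Val : Type} [DecidableEq P] [DecidableEq V]

/-- States. -/
abbrev State (P V Val : Type) := P → V → Val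

/-- State update: set variable `x` of process `q` to `v`. -/
def supd (s : State P V Val) (q : P) (x : V) (v : Val) : State P V Val :=
  fun r y => if r = q then (if y = x then v else s r y) else s r y

/-- Networks. -/
abbrev Network (P E Bx V X : Type) := P → Beh P E Bx V X

/-- Semantics of Stateful Processes, parameterised on evaluation functions
`Ev` and `BEv` and on procedure definitions `D`. -/
inductive SPStep (Ev : E → State P V Val → P → Val)
    (BEv : Bx → State P V Val → P → Bool) (D : X → Beh P E Bx V X) :
    Network P E Bx V X → State P V Val → RL P Val V X →
    Network P E Bx V X → State P V Val → Prop
  | com {N : Network P E Bx V X} {s p q e x B B'} :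
      N p = .send q e B → N q = .recv p x B' →
      SPStep Ev BEv D N s (.com p (Ev e s p) q x)
        (Function.update (Function.update N p B) q B') (supd s q x (Ev e s p))
  | lsel {N : Network P E Bx V X} {s p q B Bl mR} :
      N p = .sel q true B → N q = .branch p (some Bl) mR →
      SPStep Ev BEv D N s (.sel p q true)
        (Function.update (Function.update N p B) q Bl) s
  | rsel {N : Network P E Bx V X} {s p q B mL Br} :
      N p = .sel q false B → N q = .branch p mL (some Br) →
      SPStep Ev BEv D N s (.sel p q false)
        (Function.update (Function.update N p B) q Br) s
  | then_ {N : Network P E Bx V X} {s p b B1 B2} :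
      N p = .cond b B1 B2 → BEv b s p = true →
      SPStep Ev BEv D N s (.cond p) (Function.update N p B1) s
  | else_ {N : Network P E Bx V X} {s p b B1 B2} :
      N p = .cond b B1 B2 → BEv b s p = false →
      SPStep Ev BEv D N s (.cond p) (Function.update N p B2) s
  | call {N : Network P E Bx V X} {s p Y} :
      N p = .call Y →
      SPStep Ev BEv D N s (.call Y p) (Function.update N p (D Y)) s

/-- Pointwise branching order on networks. -/
def NMB (N N' : Network P E Bx V X) : Prop := ∀ p, mb (N p) (N' p)

end SP


theorem mb_refl {P E Bx V X : Type} : ∀ B : Beh P E Bx V X, mb B B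
  | .endB => .endB
  | .send p e B => .send p e (mb_refl B)
  | .recv p x B => .recv p x (mb_refl B)
  | .sel p l B => .sel p l (mb_refl B)
  | .branch p none none => .branch_nn p none none
  | .branch p none (some Br) => .branch_ns p none (mb_refl Br)
  | .branch p (some Bl) none => .branch_sn p none (mb_refl Bl)
  | .branch p (some Bl) (some Br) => .branch_ss p (mb_refl Bl) (mb_refl Br)
  | .cond b B1 B2 => .cond b (mb_refl B1) (mb_refl B2)
  | .call x => .call x

theorem stmt16 {P E Bx V X Val : Type} [DecidableEq P] [DecidableEq V]
    (Ev : E → State P V Val → P → Val) (BEv : Bx → State P V Val → P → Bool)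
    (D : X → Beh P E Bx V X)
    {N1 N1' N2 : Network P E Bx V X} {s s' : State P V Val} {t : RL P Val V X}
    (hmb : NMB N1' N1) (hstep : SPStep Ev BEv D N1 s t N2 s') :
    ∃ N2' : Network P E Bx V X,
      SPStep Ev BEv D N1' s t N2' s' ∧ NMB N2' N2 := by
  cases hstep with
  | @com p q e x B B' hp hq =>
    have h1 := hmb p; rw [hp] at h1
    generalize hNp : N1' p = Bp at h1
    have h2 := hmb q; rw [hq] at h2
    generalize hNq : N1' q = Bq at h2
    cases h1 with
    | @send B0 _ _ _ hB0 =>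
      cases h2 with
      | @recv B0' _ _ _ hB0' =>
        refine ⟨Function.update (Function.update N1' p B0) q B0',
          SPStep.com ?_ ?_, ?_⟩ <;> try assumption
        intro r
        rcases eq_or_ne r q with rfl | hrq
        · simp only [Function.update_self]; assumption
        · rcases eq_or_ne r p with rfl | hrp
          · simp only [Function.update_of_ne hrq, Function.update_self]; assumption
          · simp only [Function.update_of_ne hrq, Function.update_of_ne hrp]; exact hmb r
  | @lsel p q B Bl mR hp hq =>
    have h1 := hmb p; rw [hp] at h1
    generalize hNp : N1' p = Bp at h1
    have h2 := hmb q; rw [hq] at h2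
    generalize hNq : N1' q = Bq at h2
    cases h1 with
    | @sel B0 _ _ _ hB0 =>
      cases h2 with
      | @branch_sn Bl0 _ _ mR0 hBl0 =>
        refine ⟨Function.update (Function.update N1' p B0) q Bl0,
          SPStep.lsel (mR := mR0) ?_ ?_, ?_⟩ <;> try assumption
        intro r
        rcases eq_or_ne r q with rfl | hrq
        · simp only [Function.update_self]; assumption
        · rcases eq_or_ne r p with rfl | hrp
          · simp only [Function.update_of_ne hrq, Function.update_self]; assumption
          · simp only [Function.update_of_ne hrq, Function.update_of_ne hrp]; exact hmb r
      | @branch_ss Bl0 _ Br0 _ _ hBl0 hBr0 =>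
        refine ⟨Function.update (Function.update N1' p B0) q Bl0,
          SPStep.lsel (mR := some Br0) ?_ ?_, ?_⟩ <;> try assumption
        intro r
        rcases eq_or_ne r q with rfl | hrq
        · simp only [Function.update_self]; assumption
        · rcases eq_or_ne r p with rfl | hrp
          · simp only [Function.update_of_ne hrq, Function.update_self]; assumption
          · simp only [Function.update_of_ne hrq, Function.update_of_ne hrp]; exact hmb r
  | @rsel p q B mL Br hp hq =>
    have h1 := hmb p; rw [hp] at h1
    generalize hNp : N1' p = Bp at h1
    have h2 := hmb q; rw [hq] at h2
    generalize hNq : N1' q = Bq at h2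
    cases h1 with
    | @sel B0 _ _ _ hB0 =>
      cases h2 with
      | @branch_ns Br0 _ _ mL0 hBr0 =>
        refine ⟨Function.update (Function.update N1' p B0) q Br0,
          SPStep.rsel (mL := mL0) ?_ ?_, ?_⟩ <;> try assumption
        intro r
        rcases eq_or_ne r q with rfl | hrq
        · simp only [Function.update_self]; assumption
        · rcases eq_or_ne r p with rfl | hrp
          · simp only [Function.update_of_ne hrq, Function.update_self]; assumption
          · simp only [Function.update_of_ne hrq, Function.update_of_ne hrp]; exact hmb r
      | @branch_ss Bl0 _ Br0 _ _ hBl0 hBr0 =>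
        refine ⟨Function.update (Function.update N1' p B0) q Br0,
          SPStep.rsel (mL := some Bl0) ?_ ?_, ?_⟩ <;> try assumption
        intro r
        rcases eq_or_ne r q with rfl | hrq
        · simp only [Function.update_self]; assumption
        · rcases eq_or_ne r p with rfl | hrp
          · simp only [Function.update_of_ne hrq, Function.update_self]; assumption
          · simp only [Function.update_of_ne hrq, Function.update_of_ne hrp]; exact hmb r
  | @then_ p b B1 B2 hp hb =>
    have h1 := hmb p; rw [hp] at h1
    generalize hNp : N1' p = Bp at h1
    cases h1 with
    | @cond B10 _ B20 _ _ h10 h20 =>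
      refine ⟨Function.update N1' p B10, SPStep.then_ (B2 := B20) ?_ hb, ?_⟩
      · assumption
      intro r
      rcases eq_or_ne r p with rfl | hrp
      · simp only [Function.update_self]; first | assumption | exact mb_refl _
      · simp only [Function.update_of_ne hrp]; exact hmb r
  | @else_ p b B1 B2 hp hb =>
    have h1 := hmb p; rw [hp] at h1
    generalize hNp : N1' p = Bp at h1
    cases h1 with
    | @cond B10 _ B20 _ _ h10 h20 =>
      refine ⟨Function.update N1' p B20, SPStep.else_ (B1 := B10) ?_ hb, ?_⟩
      · assumption
      intro r
      rcases eq_or_ne r p with rfl | hrp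
      · simp only [Function.update_self]; first | assumption | exact mb_refl _
      · simp only [Function.update_of_ne hrp]; exact hmb r
  | @call p Y hp =>
    have h1 := hmb p; rw [hp] at h1
    generalize hNp : N1' p = Bp at h1
    cases h1 with
    | call =>
      refine ⟨Function.update N1' p (D Y), SPStep.call ?_, ?_⟩
      · assumption
      intro r
      rcases eq_or_ne r p with rfl | hrp
      · simp only [Function.update_self]; first | assumption | exact mb_refl _
      · simp only [Function.update_of_ne hrp]; exact hmb r
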